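/- arXiv:2410.10572 — 14 statements merged into one kernel-verified Lean document; each statement's English description precedes it below -/
import Mathlib

section
/- For every regularized robustly reliable learner L with respect to a complexity measure C, every dataset S', every mistake budget b ∈ ℕ, and every complexity bound c ∈ ℕ, the empirical regularized robustly reliable region of L is contained in the optimal empirical regularized robustly reliable region: R̂4_L(S', b, c) ⊆ OPTR̂4(S', b, c). -/
open Classical in
/-- Number of mistakes of classifier `h` on dataset `S`. -/
noncomputable def mistakes {X Y : Type*} (h : X → Y) (S : Finset (X × Y)) : ℕ :=
  (S.filter fun p => h p.1 ≠ p.2).card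

/-- `L` is a regularized robustly reliable learner with respect to complexity measure `C`. -/
def IsRRR {X Y : Type*} (C : (X → Y) → ℕ)
    (L : Finset (X × Y) → X × ℕ → Y × ℕ × ℕ∞) : Prop :=
  ∀ (S' : Finset (X × Y)) (x : X) (b : ℕ),
    (∃ h : X → Y, mistakes h S' ≤ b) →
    (∃ h : X → Y, C h = (L S' (x, b)).2.1 ∧ mistakes h S' ≤ b ∧ h x = (L S' (x, b)).1) ∧
    ∀ h' : X → Y, mistakes h' S' ≤ b → h' x ≠ (L S' (x, b)).1 →
      (L S' (x, b)).2.2 ≤ (C h' : ℕ∞)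

/-- Empirical regularized robustly reliable region of learner `L`. -/
def R4hat {X Y : Type*} (L : Finset (X × Y) → X × ℕ → Y × ℕ × ℕ∞)
    (S' : Finset (X × Y)) (b c : ℕ) : Set X :=
  {x | (L S' (x, b)).2.1 ≤ c ∧ (c : ℕ∞) < (L S' (x, b)).2.2}

/-- Optimal empirical regularized robustly reliable region. -/
def OPTR4hat {X Y : Type*} (C : (X → Y) → ℕ) (S' : Finset (X × Y)) (b c : ℕ) : Set X :=
  {x | ∀ h0 h1 : X → Y, C h0 ≤ c → C h1 ≤ c → mistakes h0 S' ≤ b → mistakes h1 S' ≤ b →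
    h0 x = h1 x}

theorem stmt0 {X Y : Type*} [Nonempty Y] (C : (X → Y) → ℕ)
    (L : Finset (X × Y) → X × ℕ → Y × ℕ × ℕ∞) (hL : IsRRR C L)
    (S' : Finset (X × Y)) (b c : ℕ) :
    R4hat L S' b c ⊆ OPTR4hat C S' b c := by
  intro x hx h0 h1 hc0 hc1 hm0 hm1
  obtain ⟨hlow, hhigh⟩ := hx
  obtain ⟨_, hb⟩ := hL S' x b ⟨h0, hm0⟩
  have e0 : h0 x = (L S' (x, b)).1 := by
    by_contra hne
    exact absurd (le_trans (hb h0 hm0 hne) (by exact_mod_cast hc0)) (not_le.mpr hhigh)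
  have e1 : h1 x = (L S' (x, b)).1 := by
    by_contra hne
    exact absurd (le_trans (hb h1 hm1 hne) (by exact_mod_cast hc1)) (not_le.mpr hhigh)
  rw [e0, e1]
end

section
/- There exists a regularized robustly reliable learner L with respect to C such that for every dataset S', every mistake budget b ∈ ℕ, and every complexity bound c ∈ ℕ for which some classifier h satisfies C(h) ≤ c and makes at most b mistakes on S', we have R̂4_L(S', b, c) = OPTR̂4(S', b, c). (The learner outputs y = h_{S'}(x) where h_{S'} minimizes C among classifiers with at most b mistakes on S', c_low = C(h_{S'}), and c_high = min{C(h) : h makes at most b mistakes on S' and h(x) ≠ h_{S'}(x)}, with c_high = ⊤ if no such h exists.) -/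
section MinComplexityLearner

variable {X Y : Type*} (C : (X → Y) → ℕ) {S : Finset (X × Y)} {b c : ℕ}

open Classical in
/-- An arbitrary constant classifier when no classifier has at most `b` mistakes on `S`. -/
noncomputable def minComplexityFit [Nonempty Y] (S : Finset (X × Y)) (b : ℕ) : X → Y :=
  if hfit : ∃ h : X → Y, mistakes h S ≤ b then
    Function.argminOn C {h | mistakes h S ≤ b} hfit
  else fun _ => Classical.arbitrary Y

lemma mistakes_minComplexityFit_le [Nonempty Y] (hfit : ∃ h : X → Y, mistakes h S ≤ b) :
    mistakes (minComplexityFit C S b) S ≤ b := by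
  rw [minComplexityFit, dif_pos hfit]
  exact Function.argminOn_mem C _ hfit

lemma complexity_minComplexityFit_le [Nonempty Y] {h : X → Y} (hh : mistakes h S ≤ b) :
    C (minComplexityFit C S b) ≤ C h := by
  rw [minComplexityFit, dif_pos ⟨h, hh⟩]
  exact Function.argminOn_le C _ hh

/-- `⊤` when every classifier with at most `b` mistakes on `S` predicts `y` at `x`. -/
noncomputable def disagreementComplexity (S : Finset (X × Y)) (b : ℕ) (x : X) (y : Y) : ℕ∞ :=
  ⨅ (g : X → Y) (_ : mistakes g S ≤ b) (_ : g x ≠ y), (C g : ℕ∞)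

lemma disagreementComplexity_le {x : X} {y : Y} {g : X → Y} (hg : mistakes g S ≤ b)
    (hgx : g x ≠ y) : disagreementComplexity C S b x y ≤ C g :=
  iInf₂_le_of_le g hg (iInf_le_of_le hgx le_rfl)

lemma lt_disagreementComplexity_iff {x : X} {y : Y} :
    (c : ℕ∞) < disagreementComplexity C S b x y ↔
      ∀ g : X → Y, mistakes g S ≤ b → g x ≠ y → c < C g := by
  -- in `ℕ∞`, `c < a ↔ c + 1 ≤ a` turns the strict bound into one that passes through `⨅`
  have hlt (a : ℕ∞) : (c : ℕ∞) < a ↔ (c : ℕ∞) + 1 ≤ a :=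
    (ENat.add_one_le_iff (ENat.natCast_ne_top c)).symm
  simp only [hlt, disagreementComplexity, le_iInf_iff, ← Nat.cast_lt (α := ℕ∞)]

noncomputable def minComplexityLearner [Nonempty Y] (S : Finset (X × Y)) (p : X × ℕ) :
    Y × ℕ × ℕ∞ :=
  let h := minComplexityFit C S p.2
  (h p.1, C h, disagreementComplexity C S p.2 p.1 (h p.1))

theorem isRRR_minComplexityLearner [Nonempty Y] : IsRRR C (minComplexityLearner C) :=
  fun _ _ _ hfit =>
    ⟨⟨_, rfl, mistakes_minComplexityFit_le C hfit, rfl⟩,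
      fun _ hg hgx => disagreementComplexity_le C hg hgx⟩

lemma mem_OPTR4hat_iff {h₀ : X → Y} (hC : C h₀ ≤ c) (hm : mistakes h₀ S ≤ b) {x : X} :
    x ∈ OPTR4hat C S b c ↔ ∀ g : X → Y, C g ≤ c → mistakes g S ≤ b → g x = h₀ x :=
  ⟨fun hx g hgC hgm => hx g h₀ hgC hC hgm hm,
    fun hx _ _ hC₀ hC₁ hm₀ hm₁ => (hx _ hC₀ hm₀).trans (hx _ hC₁ hm₁).symm⟩

theorem R4hat_minComplexityLearner_eq_OPTR4hat [Nonempty Y]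
    (hfit : ∃ h : X → Y, C h ≤ c ∧ mistakes h S ≤ b) :
    R4hat (minComplexityLearner C) S b c = OPTR4hat C S b c := by
  obtain ⟨h, hC, hm⟩ := hfit
  set hmin := minComplexityFit C S b
  have hminC : C hmin ≤ c := (complexity_minComplexityFit_le C hm).trans hC
  ext x
  rw [mem_OPTR4hat_iff C hminC (mistakes_minComplexityFit_le C ⟨h, hm⟩)]
  change C hmin ≤ c ∧ (c : ℕ∞) < disagreementComplexity C S b x (hmin x) ↔ _
  rw [lt_disagreementComplexity_iff]
  refine ⟨fun hx g hgC hgm => ?_, fun hx => ⟨hminC, fun g hgm hgx => ?_⟩⟩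
  · by_contra hgx
    exact (hx.2 g hgm hgx).not_ge hgC
  · by_contra hgC
    exact hgx (hx g (not_lt.mp hgC) hgm)

end MinComplexityLearner

theorem stmt1 {X Y : Type*} [Nonempty Y] (C : (X → Y) → ℕ) :
    ∃ L : Finset (X × Y) → X × ℕ → Y × ℕ × ℕ∞, IsRRR C L ∧
      ∀ (S' : Finset (X × Y)) (b c : ℕ),
        (∃ h : X → Y, C h ≤ c ∧ mistakes h S' ≤ b) →
        R4hat L S' b c = OPTR4hat C S' b c :=
  ⟨minComplexityLearner C, isRRR_minComplexityLearner C,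
    fun _ _ _ hfit => R4hat_minComplexityLearner_eq_OPTR4hat C hfit⟩
end

section
/- For every regularized robustly reliable learner L with respect to C, every dataset S, every classifier f* making zero mistakes on S, and every mistake budget b ∈ ℕ, the regularized robustly reliable region satisfies R4_L(S, b, C(f*)) ⊆ OPTR4(S, b, C(f*)). -/
open Classical in
/-- The datasets obtainable from `S` by an adversary adding at most `b` points. -/
noncomputable def poisonings {X Y : Type*} (S : Finset (X × Y)) (b : ℕ) :
    Set (Finset (X × Y)) :=
  {S' | S ⊆ S' ∧ (S' \ S).card ≤ b}

/-- Regularized robustly reliable region of learner `L` on clean dataset `S`. -/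
def R4 {X Y : Type*} (L : Finset (X × Y) → X × ℕ → Y × ℕ × ℕ∞)
    (S : Finset (X × Y)) (b c : ℕ) : Set X :=
  {x | ∀ S' ∈ poisonings S b, (L S' (x, b)).2.1 ≤ c ∧ (c : ℕ∞) < (L S' (x, b)).2.2}

theorem stmt2 {X Y : Type*} [Nonempty Y] (C : (X → Y) → ℕ)
    (L : Finset (X × Y) → X × ℕ → Y × ℕ × ℕ∞) (hL : IsRRR C L)
    (S : Finset (X × Y)) (fstar : X → Y) (hf : mistakes fstar S = 0) (b : ℕ) :
    R4 L S b (C fstar) ⊆ OPTR4hat C S b (C fstar) := by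
  intro x hx h0 h1 hc0 hc1 hm0 hm1
  have hS : S ∈ poisonings S b := ⟨Finset.Subset.refl S, by simp [Finset.sdiff_self]⟩
  obtain ⟨hlow, hhigh⟩ := hx S hS
  have hex : ∃ h : X → Y, mistakes h S ≤ b := ⟨fstar, by omega⟩
  obtain ⟨_, hb⟩ := hL S x b hex
  have k0 : h0 x = (L S (x, b)).1 := by
    by_contra hne
    have := hb h0 hm0 hne
    have : ((C fstar : ℕ) : ℕ∞) < (C h0 : ℕ∞) := lt_of_lt_of_le hhigh this
    exact absurd (Nat.cast_le.mpr hc0) (not_le.mpr this)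
  have k1 : h1 x = (L S (x, b)).1 := by
    by_contra hne
    have := hb h1 hm1 hne
    have : ((C fstar : ℕ) : ℕ∞) < (C h1 : ℕ∞) := lt_of_lt_of_le hhigh this
    exact absurd (Nat.cast_le.mpr hc1) (not_le.mpr this)
  rw [k0, k1]
end

section
/- There exists a regularized robustly reliable learner L with respect to C such that for every dataset S, every classifier f* making zero mistakes on S, and every mistake budget b ∈ ℕ, one has R4_L(S, b, C(f*)) = OPTR4(S, b, C(f*)). -/
open Classical in
/-- The canonical learner: output the prediction of a minimum-complexity feasible
classifier, its complexity, and the minimum complexity of a disagreeing feasible one. -/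
noncomputable def canonL {X Y : Type*} [Nonempty Y] (C : (X → Y) → ℕ)
    (S' : Finset (X × Y)) (p : X × ℕ) : Y × ℕ × ℕ∞ :=
  if hne : ∃ h : X → Y, mistakes h S' ≤ p.2 then
    let h0 := Classical.choose ((Set.mem_image _ _ _).mp
      (Nat.sInf_mem (Set.Nonempty.image C hne)))
    (h0 p.1, C h0,
      sInf {c : ℕ∞ | ∃ h' : X → Y, mistakes h' S' ≤ p.2 ∧ h' p.1 ≠ h0 p.1 ∧ (C h' : ℕ∞) = c})
  else (Classical.arbitrary Y, 0, 0)

open Classical in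
lemma mistakes_mono {X Y : Type*} (h : X → Y) {S S' : Finset (X × Y)} (hsub : S ⊆ S') :
    mistakes h S ≤ mistakes h S' :=
  Finset.card_le_card (Finset.filter_subset_filter _ hsub)

theorem stmt3 {X Y : Type*} [Nonempty Y] (C : (X → Y) → ℕ) :
    ∃ L : Finset (X × Y) → X × ℕ → Y × ℕ × ℕ∞, IsRRR C L ∧
      ∀ (S : Finset (X × Y)) (fstar : X → Y), mistakes fstar S = 0 →
        ∀ b : ℕ, R4 L S b (C fstar) = OPTR4hat C S b (C fstar) := by
  classical
  refine ⟨canonL C, ?_, ?_⟩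
  · intro S' x b hne
    have key := Classical.choose_spec ((Set.mem_image _ _ _).mp
      (Nat.sInf_mem (Set.Nonempty.image C hne)))
    set h0 := Classical.choose ((Set.mem_image _ _ _).mp
      (Nat.sInf_mem (Set.Nonempty.image C hne))) with hh0
    have hL : canonL C S' (x, b) = (h0 x, C h0,
        sInf {c : ℕ∞ | ∃ h' : X → Y, mistakes h' S' ≤ b ∧ h' x ≠ h0 x ∧ (C h' : ℕ∞) = c}) := by
      rw [canonL, dif_pos hne]
    rw [hL]
    refine ⟨⟨h0, rfl, key.1, rfl⟩, ?_⟩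
    intro h' hfe hne'
    exact sInf_le ⟨h', hfe, hne', rfl⟩
  · intro S fstar hfs b
    ext x
    constructor
    · -- R4 ⊆ OPTR4hat
      intro hx h0 h1 hc0 hc1 hm0 hm1
      have hSp : S ∈ poisonings S b := ⟨le_refl _, by simp⟩
      have hx' := hx S hSp
      have hne : ∃ h : X → Y, mistakes h S ≤ b := ⟨h0, hm0⟩
      have key := Classical.choose_spec ((Set.mem_image _ _ _).mp
        (Nat.sInf_mem (Set.Nonempty.image C hne)))
      set hmin := Classical.choose ((Set.mem_image _ _ _).mp
        (Nat.sInf_mem (Set.Nonempty.image C hne))) with hh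
      have hL : canonL C S (x, b) = (hmin x, C hmin,
          sInf {c : ℕ∞ | ∃ h' : X → Y, mistakes h' S ≤ b ∧ h' x ≠ hmin x ∧ (C h' : ℕ∞) = c}) := by
        rw [canonL, dif_pos hne]
      rw [hL] at hx'
      have agree : ∀ h : X → Y, C h ≤ C fstar → mistakes h S ≤ b → h x = hmin x := by
        intro h hc hm
        by_contra hneq
        have hle : (sInf {c : ℕ∞ | ∃ h' : X → Y, mistakes h' S ≤ b ∧ h' x ≠ hmin x ∧
            (C h' : ℕ∞) = c}) ≤ (C h : ℕ∞) := sInf_le ⟨h, hm, hneq, rfl⟩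
        have hlt := lt_of_le_of_lt (hle.trans (by exact_mod_cast hc)) hx'.2
        exact lt_irrefl _ hlt
      rw [agree h0 hc0 hm0, agree h1 hc1 hm1]
    · -- OPTR4hat ⊆ R4
      intro hx S' hS'
      obtain ⟨hsub, hcard⟩ := hS'
      have hfeas : mistakes fstar S' ≤ b := by
        have hunion : S' = S ∪ (S' \ S) := by
          rw [Finset.union_sdiff_of_subset hsub]
        calc mistakes fstar S' = mistakes fstar (S ∪ (S' \ S)) := by rw [← hunion]
          _ ≤ mistakes fstar S + mistakes fstar (S' \ S) := by
              unfold mistakes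
              rw [Finset.filter_union]
              exact Finset.card_union_le _ _
          _ ≤ 0 + (S' \ S).card := by
              refine Nat.add_le_add (le_of_eq hfs) ?_
              exact Finset.card_le_card (Finset.filter_subset _ _)
          _ ≤ b := by simpa using hcard
      have hne : ∃ h : X → Y, mistakes h S' ≤ b := ⟨fstar, hfeas⟩
      have key := Classical.choose_spec ((Set.mem_image _ _ _).mp
        (Nat.sInf_mem (Set.Nonempty.image C hne)))
      set hmin := Classical.choose ((Set.mem_image _ _ _).mp
        (Nat.sInf_mem (Set.Nonempty.image C hne))) with hh
      have hL : canonL C S' (x, b) = (hmin x, C hmin,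
          sInf {c : ℕ∞ | ∃ h' : X → Y, mistakes h' S' ≤ b ∧ h' x ≠ hmin x ∧ (C h' : ℕ∞) = c}) := by
        rw [canonL, dif_pos hne]
      rw [hL]
      have hminC : C hmin ≤ C fstar := by
        have h1 : C hmin = sInf (C '' {h | mistakes h S' ≤ b}) := key.2
        rw [h1]; exact Nat.sInf_le ⟨fstar, hfeas, rfl⟩
      refine ⟨hminC, ?_⟩
      have hminfeas : mistakes hmin S ≤ b := le_trans (mistakes_mono _ hsub) key.1
      refine lt_of_lt_of_le (b := ((C fstar + 1 : ℕ) : ℕ∞))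
        (by exact_mod_cast Nat.lt_succ_self _) ?_
      refine le_sInf ?_
      rintro c ⟨h', hfe', hneq', rfl⟩
      by_contra hlt
      push_neg at hlt
      have hle : C h' ≤ C fstar := Nat.lt_succ_iff.mp (by exact_mod_cast hlt)
      exact hneq' (hx h' hmin hle hminC (le_trans (mistakes_mono _ hsub) hfe') hminfeas)
end

section
/- Adding points to a dataset can only enlarge the optimal empirical regularized robustly reliable region: for all datasets S ⊆ S', all b ∈ ℕ and c ∈ ℕ, OPTR̂4(S, b, c) ⊆ OPTR̂4(S', b, c). Consequently, for every dataset S, b ∈ ℕ and c ∈ ℕ, the intersection of OPTR̂4(S', b, c) over all S' ∈ A_b(S) equals OPTR̂4(S, b, c); that is, the adversary's optimal strategy is to add no points. -/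
theorem stmt4 {X Y : Type*} [Nonempty Y] (C : (X → Y) → ℕ) :
    (∀ S S' : Finset (X × Y), S ⊆ S' → ∀ b c : ℕ,
        OPTR4hat C S b c ⊆ OPTR4hat C S' b c) ∧
    (∀ (S : Finset (X × Y)) (b c : ℕ),
        ⋂ S' ∈ poisonings S b, OPTR4hat C S' b c = OPTR4hat C S b c) := by
  have mono : ∀ (S S' : Finset (X × Y)), S ⊆ S' → ∀ (h : X → Y),
      mistakes h S ≤ mistakes h S' := by
    intro S S' hSS h
    classical
    exact Finset.card_le_card (Finset.filter_subset_filter _ hSS)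
  have h1 : ∀ S S' : Finset (X × Y), S ⊆ S' → ∀ b c : ℕ,
      OPTR4hat C S b c ⊆ OPTR4hat C S' b c := by
    intro S S' hSS b c x hx h0 h1 hc0 hc1 hm0 hm1
    exact hx h0 h1 hc0 hc1 (le_trans (mono S S' hSS h0) hm0)
      (le_trans (mono S S' hSS h1) hm1)
  refine ⟨h1, fun S b c => ?_⟩
  apply Set.Subset.antisymm
  · intro x hx
    have hS : S ∈ poisonings S b := ⟨Finset.Subset.refl S, by
      simp [Finset.sdiff_self]⟩
    exact Set.biInter_subset_of_mem hS hx
  · intro x hx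
    exact Set.mem_biInter fun S' hS' => h1 S S' hS'.1 b c hx
end

section
/- Let c ≥ 1, b ∈ ℕ, ε, δ ∈ (0,1), and let f* : ℝ → {−1,1} be the right-continuous piecewise constant function with alternation points a_1 < ... < a_c (f* is constant on (−∞, a_1), on each [a_j, a_{j+1}) and on [a_c, ∞), with consecutive values differing; thus f* has exactly c alternations). Let D be a probability measure on ℝ and suppose there exist pairwise disjoint intervals I_1, ..., I_{2c}, where for each j, I_{2j−1} = [l_j, a_j) and I_{2j} = [a_j, r_j) with a_{j−1} ≤ l_j < a_j < r_j ≤ min(l_{j+1}, a_{j+1}), and D(I_j) = ε/(2c) for every j. If X_1, ..., X_m are i.i.d. with law D and m ≥ 2c(2(b+1) + 8·ln(2c/δ))/ε, then with probability at least 1−δ, the set of points x ∈ ℝ on which every h : ℝ → {−1,1} with at most c alternations and at most b mistakes on the labeled sample {(X_i, f*(X_i))} satisfies h(x) = f*(x), has D-measure at least 1−ε. -/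
open MeasureTheory

/-- The number of alternations of `f : ℝ → ℤ`: the supremum, over finite increasing
sequences `t 0 < t 1 < ... < t m`, of the number of indices `i` with `f (t i) ≠ f (t (i+1))`. -/
noncomputable def alternations (f : ℝ → ℤ) : ℕ∞ :=
  ⨆ (m : ℕ) (t : Fin (m + 1) → ℝ) (_ : StrictMono t),
    ((Finset.univ.filter fun i : Fin m => f (t i.castSucc) ≠ f (t i.succ)).card : ℕ∞)

/-- The right-continuous `{-1,1}`-valued piecewise constant function with alternation
points `a 0 < a 1 < ... < a (c-1)` and value `s` to the left of all of them. -/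
noncomputable def stepFun {c : ℕ} (a : Fin c → ℝ) (s : ℤ) : ℝ → ℤ :=
  fun x => s * (-1) ^ (Finset.univ.filter fun j => a j ≤ x).card

open Finset
open scoped ENNReal

/-!
If each of the `2c` intervals contains a sample point where `h` agrees with `f*`, then `h`
agrees with `f*` outside their union: the agreeing points `p j < q j` on both sides of `a j`
already force `c` alternations of `h`, and a disagreement at a point `x` outside the intervals
adds one more, since `f*` is constant between consecutive intervals. So the only bad event is that
some interval receives at most `b` of the `m` samples; by a Chernoff bound with the exponential
moment `2 ^ (-N)` of the number `N` of hits, this has probability at most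
`exp (b - m ε / (4c)) ≤ δ / (2c)`. The union of the intervals has measure `ε`.
-/

-- `AltChain h u v n`: a strictly increasing chain from `u` to `v` along which `h` changes value
-- at least `n` times.
inductive AltChain (h : ℝ → ℤ) : ℝ → ℝ → ℕ → Prop
  | refl (u : ℝ) : AltChain h u u 0
  | cons {u v w : ℝ} {n : ℕ} : u < v → AltChain h v w n → AltChain h u w n
  | cons_of_ne {u v w : ℝ} {n : ℕ} : u < v → h u ≠ h v → AltChain h v w n → AltChain h u w (n + 1)

namespace AltChain

variable {h : ℝ → ℤ} {u v w : ℝ} {n k : ℕ}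

theorem trans (huv : AltChain h u v n) (hvw : AltChain h v w k) : AltChain h u w (n + k) := by
  induction huv with
  | refl => simpa using hvw
  | cons hlt _ ih => exact cons hlt (ih hvw)
  | cons_of_ne hlt hne _ ih => exact (add_right_comm _ 1 k) ▸ cons_of_ne hlt hne (ih hvw)

theorem of_le (huv : u ≤ v) : AltChain h u v 0 := by
  rcases huv.eq_or_lt with rfl | hlt
  · exact refl u
  · exact cons hlt (refl v)

theorem of_ne (huv : u < v) (hne : h u ≠ h v) : AltChain h u v 1 :=
  cons_of_ne huv hne (refl v)

theorem exists_strictMono (huv : AltChain h u v n) :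
    ∃ (m : ℕ) (t : Fin (m + 1) → ℝ), StrictMono t ∧ t 0 = u ∧
      n ≤ #{i : Fin m | h (t i.castSucc) ≠ h (t i.succ)} := by
  induction huv with
  | refl u => exact ⟨0, fun _ => u, fun i j hij => absurd hij (by omega), rfl, Nat.zero_le _⟩
  | @cons u v w n hlt _ ih | @cons_of_ne u v w n hlt _ _ ih =>
    obtain ⟨m, t, ht, rfl, hn⟩ := ih
    have hcard : #{i : Fin (m + 1) | h (Fin.cons (α := fun _ => ℝ) u t i.castSucc) ≠
        h (Fin.cons (α := fun _ => ℝ) u t i.succ)} =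
        (if h u ≠ h (t 0) then 1 else 0) + #{i : Fin m | h (t i.castSucc) ≠ h (t i.succ)} := by
      rw [Fin.card_filter_univ_succ']
      simp
    refine ⟨m + 1, Fin.cons u t, Fin.strictMono_cons.2 ⟨fun j => hlt.trans_le ?_, ht⟩, rfl, ?_⟩
    · exact ht.monotone (Fin.zero_le j)
    · rw [hcard]; split_ifs <;> simp_all; omega

theorem le_alternations (huv : AltChain h u v n) : (n : ℕ∞) ≤ alternations h := by
  obtain ⟨m, t, ht, -, hn⟩ := huv.exists_strictMono
  exact le_iSup_of_le m <| le_iSup_of_le t <| le_iSup_of_le ht <| Nat.cast_le.2 hn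

theorem of_pairs {ι : Type*} [LinearOrder ι] {p q : ι → ℝ}
    (hpq : ∀ i, p i < q i) (hqp : ∀ i j, i < j → q i < p j) (hne : ∀ i, h (p i) ≠ h (q i))
    (s : Finset ι) {y z : ℝ} (hyz : y ≤ z) (hs : ∀ i ∈ s, y ≤ p i ∧ q i ≤ z) :
    AltChain h y z #s := by
  induction s using Finset.induction_on_max generalizing z with
  | empty => exact of_le hyz
  | insert j s hlt ih =>
    have hj := hs j (mem_insert_self j s)
    have hys : AltChain h y (p j) #s := ih hj.1 fun i hi =>
      ⟨(hs i (mem_insert_of_mem hi)).1, (hqp i j (hlt i hi)).le⟩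
    rw [card_insert_of_notMem fun hmem => (hlt j hmem).false]
    exact (hys.trans (of_ne (hpq j) (hne j))).trans (of_le hj.2)

end AltChain

section StepFun

variable {c : ℕ} {a : Fin c → ℝ} {s : ℤ} {y z : ℝ}

theorem stepFun_congr (h : ∀ k, a k ≤ y ↔ a k ≤ z) : stepFun a s y = stepFun a s z := by
  simp only [stepFun, h]

theorem stepFun_of_forall_lt (hy : ∀ k, y < a k) : stepFun a s y = s := by
  simp [stepFun, filter_false_of_mem fun k _ => (hy k).not_ge]

theorem stepFun_ne (hs : s ≠ 0) {j : Fin c} (h : ∀ k ≠ j, a k ≤ y ↔ a k ≤ z) (hy : ¬a j ≤ y)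
    (hz : a j ≤ z) : stepFun a s y ≠ stepFun a s z := by
  have hfilter : univ.filter (fun k => a k ≤ z) = insert j (univ.filter fun k => a k ≤ y) := by
    ext k
    by_cases hk : k = j
    · simp [hk, hz]
    · simp [hk, h k hk]
  have hj : j ∉ univ.filter fun k => a k ≤ y := by simpa using hy
  simp only [stepFun, hfilter, card_insert_of_notMem hj, pow_succ, mul_neg, mul_one, ne_eq,
    self_eq_neg]
  exact mul_ne_zero hs (pow_ne_zero _ (by norm_num))

end StepFun

section Intervals

variable {c : ℕ} {a l r : Fin c → ℝ} {s : ℤ}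

theorem lt_of_mem_Ico_of_lt (hsep : ∀ j k, j < k → r j ≤ l k) {j k : Fin c} {y z : ℝ}
    (hy : y ∈ Set.Ico (l j) (r j)) (hz : z ∈ Set.Ico (l k) (r k)) (hjk : j < k) : y < z :=
  hy.2.trans_le ((hsep j k hjk).trans hz.1)

theorem monotone_of_mem_Ico (hsep : ∀ j k, j < k → r j ≤ l k) {p : Fin c → ℝ}
    (hp : ∀ j, p j ∈ Set.Ico (l j) (r j)) : Monotone p := fun j k hjk => by
  rcases hjk.eq_or_lt with rfl | hlt
  exacts [le_rfl, (lt_of_mem_Ico_of_lt hsep (hp j) (hp k) hlt).le]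

theorem le_iff_lt_of_mem_Ico (hl : ∀ j, l j < a j) (hr : ∀ j, a j < r j)
    (hsep : ∀ j k, j < k → r j ≤ l k) {j k : Fin c} {y : ℝ} (hy : y ∈ Set.Ico (l j) (r j))
    (hkj : k ≠ j) : a k ≤ y ↔ k < j := by
  have hak : a k ∈ Set.Ico (l k) (r k) := ⟨(hl k).le, hr k⟩
  rcases hkj.lt_or_gt with hlt | hlt
  · exact iff_of_true (lt_of_mem_Ico_of_lt hsep hak hy hlt).le hlt
  · exact iff_of_false (lt_of_mem_Ico_of_lt hsep hy hak hlt).not_ge hlt.not_gt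

theorem le_iff_of_notMem_Ico (hl : ∀ j, l j < a j) (hr : ∀ j, a j < r j) {k : Fin c} {x : ℝ}
    (hx : x ∉ Set.Ico (l k) (r k)) : a k ≤ x ↔ r k ≤ x :=
  ⟨fun hax => le_of_not_gt fun hxr => hx ⟨(hl k).le.trans hax, hxr⟩,
    fun hrx => (hr k).le.trans hrx⟩

theorem stepFun_ne_of_mem_Ico (hs : s ≠ 0) (hl : ∀ j, l j < a j) (hr : ∀ j, a j < r j)
    (hsep : ∀ j k, j < k → r j ≤ l k) {j : Fin c} {y z : ℝ} (hy : y ∈ Set.Ico (l j) (a j))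
    (hz : z ∈ Set.Ico (a j) (r j)) : stepFun a s y ≠ stepFun a s z := by
  refine stepFun_ne hs (fun k hk => ?_) hy.2.not_ge hz.1
  rw [le_iff_lt_of_mem_Ico hl hr hsep (Set.Ico_subset_Ico_right (hr j).le hy) hk,
    le_iff_lt_of_mem_Ico hl hr hsep (Set.Ico_subset_Ico_left (hl j).le hz) hk]

theorem stepFun_eq_of_notMem_Ico (hl : ∀ j, l j < a j) (hr : ∀ j, a j < r j)
    (hsep : ∀ j k, j < k → r j ≤ l k) {j : Fin c} {x z : ℝ} (hx : ∀ k, x ∉ Set.Ico (l k) (r k))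
    (hjx : r j ≤ x) (hmax : ∀ k, r k ≤ x → k ≤ j) (hz : z ∈ Set.Ico (a j) (r j)) :
    stepFun a s x = stepFun a s z := by
  refine stepFun_congr fun k => ?_
  rw [le_iff_of_notMem_Ico hl hr (hx k)]
  by_cases hk : k = j
  · exact hk ▸ iff_of_true hjx hz.1
  rw [le_iff_lt_of_mem_Ico hl hr hsep (Set.Ico_subset_Ico_left (hl j).le hz) hk]
  exact ⟨fun hrk => (hmax k hrk).lt_of_ne hk,
    fun hlt => (hsep k j hlt).trans (((hl j).trans (hr j)).le.trans hjx)⟩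

theorem stepFun_eq_of_forall_lt {n : ℕ} {a l r : Fin (n + 1) → ℝ} (hl : ∀ j, l j < a j)
    (hr : ∀ j, a j < r j) (hsep : ∀ j k, j < k → r j ≤ l k) {x y : ℝ} (hx : ∀ k, x < l k)
    (hy : y ∈ Set.Ico (l 0) (a 0)) : stepFun a s x = stepFun a s y := by
  have hya : ∀ k, y < a k := fun k => (eq_or_ne k 0).elim (fun hk => hk ▸ hy.2) fun hk =>
    lt_of_mem_Ico_of_lt hsep (Set.Ico_subset_Ico_right (hr 0).le hy) ⟨(hl k).le, hr k⟩
      ((Fin.zero_le k).lt_of_ne hk.symm)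
  rw [stepFun_of_forall_lt fun k => (hx k).trans (hl k), stepFun_of_forall_lt hya]

theorem altChain_of_mem_Ico (hs : s ≠ 0) (hl : ∀ j, l j < a j) (hr : ∀ j, a j < r j)
    (hsep : ∀ j k, j < k → r j ≤ l k) {h : ℝ → ℤ} {p q : Fin c → ℝ}
    (hp : ∀ j, p j ∈ Set.Ico (l j) (a j)) (hq : ∀ j, q j ∈ Set.Ico (a j) (r j))
    (hhp : ∀ j, h (p j) = stepFun a s (p j)) (hhq : ∀ j, h (q j) = stepFun a s (q j))
    (S : Finset (Fin c)) {y z : ℝ} (hyz : y ≤ z) (hS : ∀ i ∈ S, y ≤ p i ∧ q i ≤ z) :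
    AltChain h y z #S := by
  refine AltChain.of_pairs (fun j => (hp j).2.trans_le (hq j).1) (fun j k hjk =>
    lt_of_mem_Ico_of_lt hsep (Set.Ico_subset_Ico_left (hl j).le (hq j))
      (Set.Ico_subset_Ico_right (hr k).le (hp k)) hjk) (fun j => ?_) S hyz hS
  rw [hhp, hhq]
  exact stepFun_ne_of_mem_Ico hs hl hr hsep (hp j) (hq j)

theorem exists_altChain_of_ne_stepFun {n : ℕ} {a l r : Fin (n + 1) → ℝ} (hs : s ≠ 0)
    (hl : ∀ j, l j < a j) (hr : ∀ j, a j < r j) (hsep : ∀ j k, j < k → r j ≤ l k)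
    {h : ℝ → ℤ} {p q : Fin (n + 1) → ℝ}
    (hp : ∀ j, p j ∈ Set.Ico (l j) (a j)) (hq : ∀ j, q j ∈ Set.Ico (a j) (r j))
    (hhp : ∀ j, h (p j) = stepFun a s (p j)) (hhq : ∀ j, h (q j) = stepFun a s (q j))
    {x : ℝ} (hx : ∀ j, x ∉ Set.Ico (l j) (r j)) (hne : h x ≠ stepFun a s x) :
    ∃ u v, AltChain h u v (n + 2) := by
  have hpairs := altChain_of_mem_Ico hs hl hr hsep hp hq hhp hhq
  have hp_mono := monotone_of_mem_Ico hsep fun j => Set.Ico_subset_Ico_right (hr j).le (hp j)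
  have hq_mono := monotone_of_mem_Ico hsep fun j => Set.Ico_subset_Ico_left (hl j).le (hq j)
  have hxl : ∀ j, ¬r j ≤ x → x < l j := fun j hxr =>
    lt_of_not_ge fun hlx => hx j ⟨hlx, lt_of_not_ge hxr⟩
  -- `f*` takes the same value at `x` as at the nearest agreeing point on the left (`q jL`, for
  -- the last interval `jL` left of `x`) or, if there is none, on the right (`p 0`).
  by_cases hleft : ∃ j, r j ≤ x
  · obtain ⟨jL, hjL, hmax⟩ := exists_max_image (univ.filter fun k => r k ≤ x) id
      (let ⟨j, hj⟩ := hleft; ⟨j, by simpa using hj⟩)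
    simp only [mem_filter, mem_univ, true_and, id] at hjL hmax
    have hqx : h (q jL) ≠ h x := by
      rw [hhq, ← stepFun_eq_of_notMem_Ico hl hr hsep hx hjL hmax (hq jL)]
      exact Ne.symm hne
    have hbefore := hpairs (univ.filter fun k => r k ≤ x)
      ((hp_mono (Fin.zero_le jL)).trans ((hp jL).2.trans_le (hq jL).1).le)
      fun i hi => ⟨hp_mono (Fin.zero_le i), hq_mono (hmax i (by simpa using hi))⟩
    have hafter := hpairs (univ.filter fun k => ¬r k ≤ x) (le_max_left x (q (Fin.last n)))
      fun i hi => ⟨(hxl i (by simpa using hi)).le.trans (hp i).1,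
        (hq_mono (Fin.le_last i)).trans (le_max_right _ _)⟩
    refine ⟨p 0, max x (q (Fin.last n)), ?_⟩
    convert (hbefore.trans (AltChain.of_ne ((hq jL).2.trans_le hjL) hqx)).trans hafter using 1
    rw [add_right_comm, card_filter_add_card_filter_not, card_univ, Fintype.card_fin]
  · push Not at hleft
    have hxl' : ∀ k, x < l k := fun k => hxl k (hleft k).not_ge
    have hxp : h x ≠ h (p 0) := by
      rwa [hhp, ← stepFun_eq_of_forall_lt hl hr hsep hxl' (hp 0)]
    have hchain := (AltChain.of_ne ((hxl' 0).trans_le (hp 0).1) hxp).trans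
      (hpairs univ ((hp_mono (Fin.zero_le _)).trans ((hp _).2.trans_le (hq _).1).le)
        fun i _ => ⟨hp_mono (Fin.zero_le i), hq_mono (Fin.le_last i)⟩)
    rw [card_univ, Fintype.card_fin, add_comm] at hchain
    exact ⟨_, _, hchain⟩

theorem eq_stepFun_of_alternations_le (hc : 1 ≤ c) (hs : s ≠ 0)
    (hl : ∀ j, l j < a j) (hr : ∀ j, a j < r j) (hsep : ∀ j k, j < k → r j ≤ l k)
    {h : ℝ → ℤ} (halt : alternations h ≤ c) {p q : Fin c → ℝ}
    (hp : ∀ j, p j ∈ Set.Ico (l j) (a j)) (hq : ∀ j, q j ∈ Set.Ico (a j) (r j))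
    (hhp : ∀ j, h (p j) = stepFun a s (p j)) (hhq : ∀ j, h (q j) = stepFun a s (q j))
    {x : ℝ} (hx : ∀ j, x ∉ Set.Ico (l j) (r j)) : h x = stepFun a s x := by
  obtain ⟨n, rfl⟩ : ∃ n, c = n + 1 := ⟨c - 1, by omega⟩
  by_contra hne
  obtain ⟨u, v, huv⟩ := exists_altChain_of_ne_stepFun hs hl hr hsep hp hq hhp hhq hx hne
  exact absurd (Nat.cast_le.1 (huv.le_alternations.trans halt)) (by omega)

end Intervals

theorem exists_mem_eq_of_card_ne_le_lt {α β : Type*} {m b : ℕ} {ω : Fin m → α} {f g : α → β}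
    {T : Set α} [DecidablePred (· ∈ T)] [DecidableEq β]
    (hmis : #{i | f (ω i) ≠ g (ω i)} ≤ b) (hT : b < #{i | ω i ∈ T}) : ∃ y ∈ T, f y = g y := by
  obtain ⟨i, hiT, hi⟩ := exists_mem_notMem_of_card_lt_card (hmis.trans_lt hT)
  simp only [mem_filter, mem_univ, true_and, not_not] at hiT hi
  exact ⟨ω i, hiT, hi⟩

theorem two_pow_mul_one_sub_half_pow_le_exp {x : ℝ} (hx : x ≤ 2) (b m : ℕ) :
    2 ^ b * (1 - x / 2) ^ m ≤ Real.exp (b - m * x / 2) := by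
  have h2 : (2 : ℝ) ≤ Real.exp 1 := by linarith [Real.add_one_le_exp (1 : ℝ)]
  calc 2 ^ b * (1 - x / 2) ^ m ≤ Real.exp 1 ^ b * Real.exp (-(x / 2)) ^ m :=
        mul_le_mul (pow_le_pow_left₀ zero_le_two h2 b)
          (pow_le_pow_left₀ (by linarith) (by linarith [Real.add_one_le_exp (-(x / 2))]) m)
          (pow_nonneg (by linarith) m) (by positivity)
    _ = Real.exp (b - m * x / 2) := by
        rw [← Real.exp_nat_mul, ← Real.exp_nat_mul, ← Real.exp_add]
        ring_nf

theorem measure_card_mem_le_le_exp {D : Measure ℝ} [IsProbabilityMeasure D] {S : Set ℝ}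
    [DecidablePred (· ∈ S)] (hS : MeasurableSet S) (m b : ℕ) :
    Measure.pi (fun _ : Fin m => D) {ω | #{i | ω i ∈ S} ≤ b} ≤
      ENNReal.ofReal (Real.exp (b - m * D.real S / 2)) := by
  set g : ℝ → ℝ := S.piecewise (fun _ => 1 / 2) (fun _ => 1) with hg_def
  have hg : Integrable g D :=
    Integrable.piecewise hS (integrable_const _).integrableOn (integrable_const _).integrableOn
  have hg_nonneg : ∀ y, 0 ≤ g y := fun y => by
    by_cases hy : y ∈ S <;> simp [g, hy]
  have hprod : ∀ ω : Fin m → ℝ, ∏ i, g (ω i) = (1 / 2) ^ #{i | ω i ∈ S} := fun ω => by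
    simp only [g, Set.piecewise, prod_ite, prod_const_one, mul_one, prod_const]
  have hint : ∫ y, g y ∂D = 1 - D.real S / 2 := by
    rw [hg_def, integral_piecewise hS (integrable_const _).integrableOn
      (integrable_const _).integrableOn]
    simp [probReal_compl_eq_one_sub hS]
    ring
  set f : (Fin m → ℝ) → ℝ := fun ω => 2 ^ b * ∏ i, g (ω i)
  have hsub : {ω : Fin m → ℝ | #{i | ω i ∈ S} ≤ b} ⊆ {ω | 1 ≤ f ω} := fun ω hω => by
    simp only [Set.mem_ofPred_eq, f, hprod] at hω ⊢
    rw [one_div_pow, ← div_eq_mul_one_div, one_le_div (by positivity)]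
    exact pow_le_pow_right₀ one_le_two hω
  have hf : Integrable f (Measure.pi fun _ : Fin m => D) :=
    (Integrable.fintype_prod fun _ => hg).const_mul _
  have hmarkov := mul_meas_ge_le_integral_of_nonneg
    (Filter.Eventually.of_forall fun ω =>
      mul_nonneg (by positivity) (prod_nonneg fun i _ => hg_nonneg (ω i))) hf 1
  rw [one_mul, integral_const_mul, integral_fintype_prod_eq_pow, hint, Fintype.card_fin]
    at hmarkov
  calc _ ≤ Measure.pi (fun _ : Fin m => D) {ω | 1 ≤ f ω} := measure_mono hsub
    _ = ENNReal.ofReal ((Measure.pi fun _ : Fin m => D).real {ω | 1 ≤ f ω}) :=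
      (ofReal_measureReal).symm
    _ ≤ _ := ENNReal.ofReal_le_ofReal <| hmarkov.trans <| two_pow_mul_one_sub_half_pow_le_exp
      (by linarith [measureReal_le_one (μ := D) (s := S)]) b m

theorem measure_card_mem_le_le_of_sampleSize {D : Measure ℝ} [IsProbabilityMeasure D] {S : Set ℝ}
    [DecidablePred (· ∈ S)] (hS : MeasurableSet S) {c b m : ℕ} (hc : 1 ≤ c) {ε δ : ℝ}
    (hε : 0 < ε) (hδ : δ ∈ Set.Ioo (0 : ℝ) 1) (hDS : D S = ENNReal.ofReal (ε / (2 * c)))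
    (hm : 2 * c * (2 * (b + 1) + 8 * Real.log (2 * c / δ)) / ε ≤ (m : ℝ)) :
    Measure.pi (fun _ : Fin m => D) {ω | #{i | ω i ∈ S} ≤ b} ≤ ENNReal.ofReal (δ / (2 * c)) := by
  have hc0 : (1 : ℝ) ≤ c := by exact_mod_cast hc
  have hDS' : D.real S = ε / (2 * c) := by
    rw [measureReal_def, hDS, ENNReal.toReal_ofReal (div_pos hε (by positivity)).le]
  have hlog : 0 < Real.log (2 * c / δ) :=
    Real.log_pos (by rw [lt_div_iff₀ hδ.1]; linarith [hδ.2])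
  have hmε : 2 * (b + 1) + 8 * Real.log (2 * c / δ) ≤ m * (ε / (2 * c)) := by
    rw [div_le_iff₀ hε] at hm
    rw [mul_div_assoc', le_div_iff₀ (by positivity)]
    linarith
  refine (measure_card_mem_le_le_exp hS m b).trans (ENNReal.ofReal_le_ofReal ?_)
  calc Real.exp (b - m * D.real S / 2) ≤ Real.exp (-Real.log (2 * c / δ)) :=
        Real.exp_le_exp.2 (by rw [hDS']; linarith)
    _ = δ / (2 * c) := by rw [Real.exp_neg, Real.exp_log (div_pos (by positivity) hδ.1), inv_div]

theorem measure_iUnion_union_le {α : Type*} [MeasurableSpace α] {μ : Measure α} {c : ℕ}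
    (hc : 1 ≤ c) {A B : Fin c → Set α} {y : ℝ} (hA : ∀ j, μ (A j) ≤ ENNReal.ofReal (y / (2 * c)))
    (hB : ∀ j, μ (B j) ≤ ENNReal.ofReal (y / (2 * c))) : μ (⋃ j, A j ∪ B j) ≤ ENNReal.ofReal y :=
  calc μ (⋃ j, A j ∪ B j) ≤ ∑ j, (μ (A j) + μ (B j)) :=
        (measure_iUnion_fintype_le _ _).trans (sum_le_sum fun j _ => measure_union_le _ _)
    _ ≤ ∑ _j : Fin c, (ENNReal.ofReal (y / (2 * c)) + ENNReal.ofReal (y / (2 * c))) :=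
        sum_le_sum fun j _ => add_le_add (hA j) (hB j)
    _ = ENNReal.ofReal y := by
        rw [sum_const, card_univ, Fintype.card_fin, nsmul_eq_mul, ← two_mul, ← mul_assoc,
          show ((c : ℝ≥0∞) * 2) = ENNReal.ofReal (2 * c) by simp [mul_comm],
          ← ENNReal.ofReal_mul (by positivity), mul_div_cancel₀ _ (by positivity)]

theorem one_sub_le_of_measure_compl_le {α : Type*} [MeasurableSpace α] {μ : Measure α}
    [IsProbabilityMeasure μ] {s : Set α} {x : ℝ≥0∞} (h : μ sᶜ ≤ x) : 1 - x ≤ μ s := by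
  rw [tsub_le_iff_right, ← measure_univ (μ := μ)]
  exact (measure_univ_le_add_compl s).trans (add_le_add le_rfl h)

theorem stmt5_general (c b m : ℕ) (hc : 1 ≤ c) (ε δ : ℝ)
    (hε : ε ∈ Set.Ioo (0 : ℝ) 1) (hδ : δ ∈ Set.Ioo (0 : ℝ) 1)
    (a : Fin c → ℝ) (s : ℤ) (hs : s = -1 ∨ s = 1)
    (l r : Fin c → ℝ) (hl : ∀ j, l j < a j) (hr : ∀ j, a j < r j)
    (hsep : ∀ j k : Fin c, j < k → r j ≤ l k)
    (D : Measure ℝ) [IsProbabilityMeasure D]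
    (hDl : ∀ j, D (Set.Ico (l j) (a j)) = ENNReal.ofReal (ε / (2 * c)))
    (hDr : ∀ j, D (Set.Ico (a j) (r j)) = ENNReal.ofReal (ε / (2 * c)))
    (hm : 2 * c * (2 * (b + 1) + 8 * Real.log (2 * c / δ)) / ε ≤ (m : ℝ)) :
    1 - ENNReal.ofReal δ ≤
      (Measure.pi fun _ : Fin m => D)
        {ω : Fin m → ℝ | 1 - ENNReal.ofReal ε ≤
          D {x : ℝ | ∀ h : ℝ → ℤ, (∀ t, h t = -1 ∨ h t = 1) →
              alternations h ≤ (c : ℕ∞) →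
              (Finset.univ.filter fun i : Fin m => h (ω i) ≠ stepFun a s (ω i)).card ≤ b →
              h x = stepFun a s x}} := by
  set μ := Measure.pi fun _ : Fin m => D
  set G : Set (Fin m → ℝ) := {ω | ∀ j, b < #{i | ω i ∈ Set.Ico (l j) (a j)} ∧
    b < #{i | ω i ∈ Set.Ico (a j) (r j)}}
  have hGc : μ Gᶜ ≤ ENNReal.ofReal δ := by
    refine (measure_mono fun ω hω => ?_).trans (measure_iUnion_union_le hc
      (fun j => measure_card_mem_le_le_of_sampleSize measurableSet_Ico hc hε.1 hδ (hDl j) hm)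
      (fun j => measure_card_mem_le_le_of_sampleSize measurableSet_Ico hc hε.1 hδ (hDr j) hm))
    simp only [G, Set.mem_compl_iff, Set.mem_ofPred_eq, not_forall, not_and_or, not_lt] at hω
    simpa using hω
  have hU : D (⋃ j, Set.Ico (l j) (r j)) ≤ ENNReal.ofReal ε := by
    simp_rw [← Set.Ico_union_Ico_eq_Ico (hl _).le (hr _).le]
    exact measure_iUnion_union_le hc (fun j => (hDl j).le) (fun j => (hDr j).le)
  refine (one_sub_le_of_measure_compl_le hGc).trans (measure_mono fun ω hω => ?_)
  refine one_sub_le_of_measure_compl_le (hU.trans' (measure_mono fun x hx => ?_))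
  by_contra hxU
  refine hx fun h _ halt hmis => ?_
  choose p hpI hp using fun j =>
    exists_mem_eq_of_card_ne_le_lt (T := Set.Ico (l j) (a j)) hmis (hω j).1
  choose q hqI hq using fun j =>
    exists_mem_eq_of_card_ne_le_lt (T := Set.Ico (a j) (r j)) hmis (hω j).2
  exact eq_stepFun_of_alternations_le hc (by rcases hs with rfl | rfl <;> decide) hl hr hsep
    halt hpI hqI hp hq (by simpa using hxU)

theorem stmt5 (c b m : ℕ) (hc : 1 ≤ c) (ε δ : ℝ)
    (hε : ε ∈ Set.Ioo (0 : ℝ) 1) (hδ : δ ∈ Set.Ioo (0 : ℝ) 1)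
    (a : Fin c → ℝ) (ha : StrictMono a) (s : ℤ) (hs : s = -1 ∨ s = 1)
    (l r : Fin c → ℝ) (hl : ∀ j, l j < a j) (hr : ∀ j, a j < r j)
    (hsep : ∀ j k : Fin c, j < k → r j ≤ l k)
    (D : Measure ℝ) [IsProbabilityMeasure D]
    (hDl : ∀ j, D (Set.Ico (l j) (a j)) = ENNReal.ofReal (ε / (2 * c)))
    (hDr : ∀ j, D (Set.Ico (a j) (r j)) = ENNReal.ofReal (ε / (2 * c)))
    (hm : 2 * c * (2 * (b + 1) + 8 * Real.log (2 * c / δ)) / ε ≤ (m : ℝ)) :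
    1 - ENNReal.ofReal δ ≤
      (Measure.pi fun _ : Fin m => D)
        {ω : Fin m → ℝ | 1 - ENNReal.ofReal ε ≤
          D {x : ℝ | ∀ h : ℝ → ℤ, (∀ t, h t = -1 ∨ h t = 1) →
              alternations h ≤ (c : ℕ∞) →
              (Finset.univ.filter fun i : Fin m => h (ω i) ≠ stepFun a s (ω i)).card ≤ b →
              h x = stepFun a s x}} :=
  stmt5_general c b m hc ε δ hε hδ a s hs l r hl hr hsep D hDl hDr hm
end

section
/- Let D be a probability measure on a measurable space, let A_1, ..., A_N be pairwise disjoint measurable sets with D(A_j) ≥ p > 0 for every j, and let b ∈ ℕ and δ ∈ (0,1). Let X_1, ..., X_m be i.i.d. with law D. If m·p ≥ 2(b+1) and m·p ≥ 8·ln(N/δ), then with probability at least 1−δ, for every j ∈ {1,...,N} at least b+1 of the points X_1, ..., X_m lie in A_j. -/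
/-!
A Chernoff bound for the count of sample points in one cell `A`: by Markov's inequality applied to
`2^{-#{i | X_i ∈ A}}`, whose expectation factorises over the independent coordinates into
`(1 - D(A)/2)^m ≤ e^{-mp/2}`, the count is at most `b` with probability at most
`2^b e^{-mp/2} ≤ e^{-mp/8} ≤ δ/N`, where the middle step uses `mp ≥ 2(b+1)` and `log 2 < 3/4`.
A union bound over the `N` cells finishes the proof.
-/

open MeasureTheory ProbabilityTheory
open scoped ENNReal

theorem ENNReal.one_sub_ofReal_div_two_le_ofReal_exp {p : ℝ} (hp : 0 ≤ p) :
    1 - ENNReal.ofReal p / 2 ≤ ENNReal.ofReal (Real.exp (-(p / 2))) := by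
  rw [← ENNReal.ofReal_ofNat 2, ← ENNReal.ofReal_div_of_pos two_pos, ← ENNReal.ofReal_one,
    ← ENNReal.ofReal_sub _ (by positivity)]
  exact ENNReal.ofReal_le_ofReal (by linarith [Real.add_one_le_exp (-(p / 2))])

theorem Real.two_pow_mul_exp_neg_half_le {b : ℕ} {x : ℝ} (h : 2 * (b + 1) ≤ x) :
    2 ^ b * Real.exp (-(x / 2)) ≤ Real.exp (-(x / 8)) := by
  have hlog2 : Real.log 2 < 3 / 4 := Real.log_two_lt_d9.trans (by norm_num)
  rw [show (2 : ℝ) ^ b = Real.exp (b * Real.log 2) by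
      rw [Real.exp_nat_mul, Real.exp_log two_pos],
    ← Real.exp_add, Real.exp_le_exp]
  nlinarith [Real.log_pos one_lt_two, (b.cast_nonneg : (0 : ℝ) ≤ b)]

theorem Real.exp_neg_le_inv_of_log_le {c t : ℝ} (hc : 0 < c) (h : Real.log c ≤ t) :
    Real.exp (-t) ≤ c⁻¹ := by
  rw [Real.exp_neg]
  exact inv_anti₀ hc ((Real.log_le_iff_le_exp hc).1 h)

theorem ENNReal.nsmul_ofReal_div_le (N : ℕ) (δ : ℝ) :
    N • ENNReal.ofReal (δ / N) ≤ ENNReal.ofReal δ := by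
  rcases N.eq_zero_or_pos with rfl | hN
  · simp
  · rw [nsmul_eq_mul, ← ENNReal.ofReal_natCast, ← ENNReal.ofReal_mul (by positivity),
      mul_div_cancel₀ _ (by positivity)]

section

variable {α ι : Type*} [MeasurableSpace α] [Fintype ι]

theorem lintegral_fintype_prod_eq_pow (D : Measure α) [IsProbabilityMeasure D] {f : α → ℝ≥0∞}
    (hf : Measurable f) :
    ∫⁻ ω, ∏ i, f (ω i) ∂Measure.pi (fun _ : ι => D) = (∫⁻ x, f x ∂D) ^ Fintype.card ι := by
  rw [lintegral_prod_eq_prod_lintegral_of_indepFun _ _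
      (iIndepFun_pi fun _ => hf.aemeasurable) fun i => hf.comp (measurable_pi_apply i),
    Finset.prod_congr rfl fun i _ =>
      (measurePreserving_eval (fun _ : ι => D) i).lintegral_comp hf,
    Finset.prod_const, Finset.card_univ]

theorem lintegral_ite_mem_inv_two (D : Measure α) [IsProbabilityMeasure D] {A : Set α}
    (hA : MeasurableSet A) [DecidablePred (· ∈ A)] :
    ∫⁻ x, (if x ∈ A then 2⁻¹ else 1) ∂D = 1 - D A / 2 := by
  have hsplit : ∫⁻ x, (if x ∈ A then (2⁻¹ : ℝ≥0∞) else 1) ∂D = D A / 2 + (1 - D A) := by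
    rw [← lintegral_add_compl _ hA, setLIntegral_congr_fun hA fun x hx => if_pos hx,
      setLIntegral_congr_fun hA.compl fun x (hx : x ∈ Aᶜ) => if_neg hx, setLIntegral_const,
      setLIntegral_const, one_mul, prob_compl_eq_one_sub hA, mul_comm, div_eq_mul_inv]
  rw [hsplit]
  symm
  refine ENNReal.sub_eq_of_eq_add (by finiteness) ?_
  rw [add_comm, ← add_assoc, ENNReal.add_halves, add_tsub_cancel_of_le prob_le_one]

open scoped Classical in
theorem measure_card_filter_mem_le_le (D : Measure α) [IsProbabilityMeasure D] {A : Set α}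
    (hA : MeasurableSet A) (b : ℕ) :
    Measure.pi (fun _ : ι => D) {ω | (Finset.univ.filter fun i => ω i ∈ A).card ≤ b}
      ≤ 2 ^ b * (1 - D A / 2) ^ Fintype.card ι := by
  set f : α → ℝ≥0∞ := fun x => if x ∈ A then 2⁻¹ else 1
  have hf : Measurable f := Measurable.ite hA measurable_const measurable_const
  have hprod : ∀ ω : ι → α, ∏ i, f (ω i) = 2⁻¹ ^ (Finset.univ.filter fun i => ω i ∈ A).card := by
    intro ω
    simp only [f, Finset.prod_ite, Finset.prod_const, one_pow, mul_one]
  calc Measure.pi (fun _ : ι => D) {ω | (Finset.univ.filter fun i => ω i ∈ A).card ≤ b}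
      ≤ Measure.pi (fun _ : ι => D) {ω | 2⁻¹ ^ b ≤ ∏ i, f (ω i)} := by
        refine measure_mono fun ω hω => ?_
        simp only [Set.mem_ofPred_eq, hprod] at hω ⊢
        exact pow_le_pow_of_le_one zero_le (ENNReal.inv_le_one.2 one_le_two) hω
    _ ≤ (∫⁻ ω, ∏ i, f (ω i) ∂Measure.pi (fun _ : ι => D)) / 2⁻¹ ^ b :=
        meas_ge_le_lintegral_div
          (Finset.measurable_prod _ fun i _ => hf.comp (measurable_pi_apply i)).aemeasurable
          (by simp) (by simp)
    _ = 2 ^ b * (1 - D A / 2) ^ Fintype.card ι := by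
        rw [lintegral_fintype_prod_eq_pow D hf, lintegral_ite_mem_inv_two D hA, div_eq_mul_inv,
          ENNReal.inv_pow, inv_inv, mul_comm]

open scoped Classical in
theorem measure_card_filter_mem_le_le_exp (D : Measure α) [IsProbabilityMeasure D] {A : Set α}
    (hA : MeasurableSet A) {b : ℕ} {p : ℝ} (hp : 0 ≤ p) (hpA : ENNReal.ofReal p ≤ D A)
    (h : 2 * (b + 1) ≤ Fintype.card ι * p) :
    Measure.pi (fun _ : ι => D) {ω | (Finset.univ.filter fun i => ω i ∈ A).card ≤ b}
      ≤ ENNReal.ofReal (Real.exp (-(Fintype.card ι * p / 8))) := by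
  calc _ ≤ 2 ^ b * (1 - D A / 2) ^ Fintype.card ι := measure_card_filter_mem_le_le D hA b
    _ ≤ 2 ^ b * ENNReal.ofReal (Real.exp (-(p / 2))) ^ Fintype.card ι := by
        gcongr
        exact (tsub_le_tsub_left (ENNReal.div_le_div_right hpA 2) 1).trans
          (ENNReal.one_sub_ofReal_div_two_le_ofReal_exp hp)
    _ = ENNReal.ofReal (2 ^ b * Real.exp (-(Fintype.card ι * p / 2))) := by
        rw [show -(Fintype.card ι * p / 2) = Fintype.card ι * -(p / 2) by ring, Real.exp_nat_mul,
          ENNReal.ofReal_mul (by positivity), ENNReal.ofReal_pow (by positivity),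
          ENNReal.ofReal_pow (by positivity), ENNReal.ofReal_ofNat]
    _ ≤ _ := ENNReal.ofReal_le_ofReal (Real.two_pow_mul_exp_neg_half_le h)

theorem one_sub_sum_le_measure_setOf_forall {Ω : Type*} [MeasurableSpace Ω] (μ : Measure Ω)
    [IsProbabilityMeasure μ] (P : ι → Ω → Prop) :
    1 - ∑ i, μ {ω | ¬P i ω} ≤ μ {ω | ∀ i, P i ω} := by
  have hcompl : {ω | ∀ i, P i ω}ᶜ = ⋃ i, {ω | ¬P i ω} := by ext; simp
  rw [tsub_le_iff_right, ← measure_univ (μ := μ)]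
  calc μ Set.univ ≤ μ {ω | ∀ i, P i ω} + μ {ω | ∀ i, P i ω}ᶜ := measure_univ_le_add_compl _
    _ ≤ μ {ω | ∀ i, P i ω} + ∑ i, μ {ω | ¬P i ω} := by
        rw [hcompl]
        exact add_le_add_right (measure_iUnion_fintype_le μ fun i => {ω | ¬P i ω}) _

end

open scoped Classical in
theorem stmt7_general {α : Type*} [MeasurableSpace α] (D : Measure α) [IsProbabilityMeasure D]
    (N : ℕ) (A : Fin N → Set α) (hmeas : ∀ j, MeasurableSet (A j))
    (p : ℝ) (hp : 0 < p) (hA : ∀ j, ENNReal.ofReal p ≤ D (A j))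
    (b m : ℕ) (δ : ℝ) (hδ : δ ∈ Set.Ioo (0 : ℝ) 1)
    (h1 : 2 * (b + 1) ≤ (m : ℝ) * p)
    (h2 : 8 * Real.log (N / δ) ≤ (m : ℝ) * p) :
    1 - ENNReal.ofReal δ ≤
      (Measure.pi fun _ : Fin m => D)
        {ω : Fin m → α | ∀ j : Fin N,
          b + 1 ≤ (Finset.univ.filter fun i : Fin m => ω i ∈ A j).card} := by
  have hbad : ∀ j, (Measure.pi fun _ : Fin m => D)
      {ω | ¬b + 1 ≤ (Finset.univ.filter fun i : Fin m => ω i ∈ A j).card}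
        ≤ ENNReal.ofReal (δ / N) := fun j => by
    have hexp := measure_card_filter_mem_le_le_exp (ι := Fin m) D (hmeas j) hp.le (hA j)
      (by rwa [Fintype.card_fin])
    have hlog : Real.log (N / δ) ≤ m * p / 8 := by linarith
    rw [Fintype.card_fin] at hexp
    simp_rw [not_le, Nat.lt_succ_iff]
    refine hexp.trans (ENNReal.ofReal_le_ofReal ?_)
    rw [← inv_div (N : ℝ) δ]
    exact Real.exp_neg_le_inv_of_log_le (div_pos (Nat.cast_pos.2 j.pos) hδ.1) hlog
  calc 1 - ENNReal.ofReal δ ≤ 1 - ∑ j, (Measure.pi fun _ : Fin m => D)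
        {ω | ¬b + 1 ≤ (Finset.univ.filter fun i : Fin m => ω i ∈ A j).card} :=
        tsub_le_tsub_left ((Finset.sum_le_card_nsmul _ _ _ fun j _ => hbad j).trans
          (by simpa using ENNReal.nsmul_ofReal_div_le N δ)) 1
    _ ≤ _ := one_sub_sum_le_measure_setOf_forall _ _

open scoped Classical in
theorem stmt7 {α : Type*} [MeasurableSpace α] (D : Measure α) [IsProbabilityMeasure D]
    (N : ℕ) (A : Fin N → Set α) (hmeas : ∀ j, MeasurableSet (A j))
    (hdisj : Pairwise (Function.onFun Disjoint A))
    (p : ℝ) (hp : 0 < p) (hA : ∀ j, ENNReal.ofReal p ≤ D (A j))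
    (b m : ℕ) (δ : ℝ) (hδ : δ ∈ Set.Ioo (0 : ℝ) 1)
    (h1 : 2 * (b + 1) ≤ (m : ℝ) * p)
    (h2 : 8 * Real.log (N / δ) ≤ (m : ℝ) * p) :
    1 - ENNReal.ofReal δ ≤
      (Measure.pi fun _ : Fin m => D)
        {ω : Fin m → α | ∀ j : Fin N,
          b + 1 ≤ (Finset.univ.filter fun i : Fin m => ω i ∈ A j).card} :=
  stmt7_general D N A hmeas p hp hA b m δ hδ h1 h2
end

section
/- Let (M, d) be a metric space, Y a type, and S a finite set of labeled points (x_i, y_i) ∈ M × Y with pairwise distinct inputs x_i, containing at least two points with different labels. Let r_S = min{d(x_i, x_j) : (x_i, y_i), (x_j, y_j) ∈ S, y_i ≠ y_j} (which is positive). Then there exists a classifier h : M → Y with h(x_i) = y_i for every (x_i, y_i) ∈ S such that for every (x_i, y_i) ∈ S and every x' ∈ M with h(x') ≠ y_i, one has d(x_i, x') ≥ r_S / 2; that is, the nearest-neighbor classifier realizes S with global margin at least r_S / 2. -/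
theorem stmt9 {M Y : Type*} [MetricSpace M] (S : Finset (M × Y))
    (hinj : ∀ p ∈ S, ∀ q ∈ S, p.1 = q.1 → p = q)
    (hdiff : ∃ p ∈ S, ∃ q ∈ S, p.2 ≠ q.2)
    (rS : ℝ)
    (hrS : IsLeast {d : ℝ | ∃ p ∈ S, ∃ q ∈ S, p.2 ≠ q.2 ∧ d = dist p.1 q.1} rS) :
    0 < rS ∧
      ∃ h : M → Y, (∀ p ∈ S, h p.1 = p.2) ∧
        ∀ p ∈ S, ∀ x' : M, h x' ≠ p.2 → rS / 2 ≤ dist p.1 x' := by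
  obtain ⟨p₀, hp₀, q₀, hq₀, hpq₀⟩ := hdiff
  have hne : S.Nonempty := ⟨p₀, hp₀⟩
  obtain ⟨⟨p, hp, q, hq, hpq, heq⟩, hlb⟩ := hrS
  have hrpos : 0 < rS := by
    rw [heq]
    refine dist_pos.mpr fun h => hpq ?_
    rw [hinj p hp q hq h]
  have key : ∀ x : M, ∃ n ∈ S, ∀ q ∈ S, dist x n.1 ≤ dist x q.1 := fun x =>
    S.exists_min_image (fun p => dist x p.1) hne
  choose n hnS hnmin using key
  refine ⟨hrpos, fun x => (n x).2, ?_, ?_⟩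
  · intro r hr
    have h0 : dist r.1 (n r.1).1 ≤ 0 := by simpa using hnmin r.1 r hr
    have h1 : (n r.1).1 = r.1 := by
      have := le_antisymm h0 dist_nonneg
      exact (dist_eq_zero.mp this).symm
    exact congrArg Prod.snd (hinj _ (hnS r.1) r hr h1)
  · intro r hr x' hx'
    have hmem : dist (n x').1 r.1 ∈
        {d : ℝ | ∃ p ∈ S, ∃ q ∈ S, p.2 ≠ q.2 ∧ d = dist p.1 q.1} :=
      ⟨n x', hnS x', r, hr, hx', rfl⟩
    have h1 : rS ≤ dist (n x').1 r.1 := hlb hmem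
    have h2 : dist x' (n x').1 ≤ dist x' r.1 := hnmin x' r hr
    have h3 : dist (n x').1 r.1 ≤ dist (n x').1 x' + dist x' r.1 := dist_triangle _ _ _
    rw [dist_comm x' (n x').1] at h2
    rw [dist_comm r.1 x']
    linarith
end

section
/- Let Y be a type and S a finite set of labeled points (x_i, y_i) ∈ ℝ^n × Y with pairwise distinct inputs, containing at least two points with different labels, and let r_S = min{‖x_i − x_j‖ : (x_i, y_i), (x_j, y_j) ∈ S, y_i ≠ y_j}. Then the supremum, over classifiers h : ℝ^n → Y with h(x_i) = y_i for all (x_i, y_i) ∈ S, of the global margin of h with respect to S equals r_S / 2, and this supremum is attained (by the nearest-neighbor classifier). Equivalently, the minimum global-margin complexity of a classifier realizing S is 2 / r_S. -/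
theorem stmt11 {Y : Type*} (n : ℕ) (S : Finset (EuclideanSpace ℝ (Fin n) × Y))
    (hS : S.Nonempty)
    (hinj : ∀ p ∈ S, ∀ q ∈ S, p.1 = q.1 → p = q)
    (hdiff : ∃ p ∈ S, ∃ q ∈ S, p.2 ≠ q.2)
    (rS : ℝ)
    (hrS : IsLeast {d : ℝ | ∃ p ∈ S, ∃ q ∈ S, p.2 ≠ q.2 ∧ d = dist p.1 q.1} rS) :
    IsGreatest {g : ℝ | ∃ h : EuclideanSpace ℝ (Fin n) → Y,
        (∀ p ∈ S, h p.1 = p.2) ∧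
        g = S.inf' hS (fun p => Metric.infDist p.1 {x' | h x' ≠ p.2})}
      (rS / 2) := by
  classical
  obtain ⟨hrmem, hrlb⟩ := hrS
  obtain ⟨p0, hp0, q0, hq0, hpq0, hrd⟩ := hrmem
  have hrpos : 0 < rS := by
    rw [hrd, dist_pos]
    intro he
    exact hpq0 (congrArg Prod.snd (hinj _ hp0 _ hq0 he))
  -- Upper bound: any realizing classifier has margin ≤ rS/2
  have ub : ∀ h : EuclideanSpace ℝ (Fin n) → Y, (∀ p ∈ S, h p.1 = p.2) →
      S.inf' hS (fun p => Metric.infDist p.1 {x' | h x' ≠ p.2}) ≤ rS / 2 := by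
    intro h hh
    set m := midpoint ℝ p0.1 q0.1 with hm
    by_cases hc : h m = p0.2
    · refine le_trans (Finset.inf'_le _ hq0) ?_
      have hmem : m ∈ {x' | h x' ≠ q0.2} := by
        simp only [Set.mem_setOf_eq, hc]; exact hpq0
      calc Metric.infDist q0.1 {x' | h x' ≠ q0.2} ≤ dist q0.1 m :=
            Metric.infDist_le_dist_of_mem hmem
        _ = rS / 2 := by
            rw [hm, dist_right_midpoint (𝕜 := ℝ), hrd]
            simp [div_eq_inv_mul]
    · refine le_trans (Finset.inf'_le _ hp0) ?_
      calc Metric.infDist p0.1 {x' | h x' ≠ p0.2} ≤ dist p0.1 m :=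
            Metric.infDist_le_dist_of_mem hc
        _ = rS / 2 := by
            rw [hm, dist_left_midpoint (𝕜 := ℝ), hrd]
            simp [div_eq_inv_mul]
  -- nearest neighbor classifier
  have hmin : ∀ x : EuclideanSpace ℝ (Fin n), ∃ p ∈ S, ∀ q ∈ S, dist x p.1 ≤ dist x q.1 :=
    fun x => S.exists_min_image (fun p => dist x p.1) hS
  choose f hfS hfmin using hmin
  set h : EuclideanSpace ℝ (Fin n) → Y := fun x => (f x).2 with hhdef
  have hreal : ∀ p ∈ S, h p.1 = p.2 := by
    intro p hp
    have h1 : dist p.1 (f p.1).1 ≤ dist p.1 p.1 := hfmin p.1 p hp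
    rw [dist_self] at h1
    have h2 : (f p.1).1 = p.1 := (dist_le_zero.mp h1).symm
    exact congrArg Prod.snd (hinj _ (hfS p.1) _ hp h2)
  have hlocal : ∀ p ∈ S, rS / 2 ≤ Metric.infDist p.1 {x' | h x' ≠ p.2} := by
    intro p hp
    have hne : {x' | h x' ≠ p.2}.Nonempty := by
      obtain ⟨a, ha, b, hb, hab⟩ := hdiff
      rcases ne_or_eq a.2 p.2 with h1 | h1
      · exact ⟨a.1, by simpa [Set.mem_setOf_eq, hreal a ha] using h1⟩
      · refine ⟨b.1, ?_⟩
        simp only [Set.mem_setOf_eq, hreal b hb]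
        exact fun e => hab (h1.trans e.symm)
    by_contra hlt
    push_neg at hlt
    obtain ⟨y, hy, hdy⟩ := (Metric.infDist_lt_iff hne).mp hlt
    have hne2 : (f y).2 ≠ p.2 := hy
    have hge : rS ≤ dist p.1 (f y).1 := hrlb ⟨p, hp, f y, hfS y, hne2.symm, rfl⟩
    have hdyf : dist y (f y).1 ≤ dist y p.1 := hfmin y p hp
    have : dist p.1 (f y).1 < rS := by
      calc dist p.1 (f y).1 ≤ dist p.1 y + dist y (f y).1 := dist_triangle _ _ _
        _ ≤ dist p.1 y + dist y p.1 := by linarith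
        _ = dist p.1 y + dist p.1 y := by rw [dist_comm y p.1]
        _ < rS / 2 + rS / 2 := by linarith
        _ = rS := by ring
    linarith
  constructor
  · exact ⟨h, hreal, le_antisymm (Finset.le_inf' hS _ hlocal) (ub h hreal)⟩
  · rintro g ⟨h', hh', rfl⟩
    exact ub h' hh'
end

section
/- Let (M, d) be a metric space, Y a type, S' a finite set of labeled points in M × Y, x_test ∈ M, y ∈ Y, and b ∈ ℕ. Suppose S' contains at least b+1 points with label different from y, and let r be the (b+1)-st smallest value in the multiset {d(x_test, x_i) : (x_i, y_i) ∈ S', y_i ≠ y}. Then every classifier h : M → Y with h(x_test) = y that makes at most b mistakes on S' satisfies inf{d(x_test, x') : x' ∈ M, h(x') ≠ y} ≤ r. -/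
theorem List.succ_le_countP_le_getElem_of_pairwise {α : Type*} [Preorder α] [DecidableLE α]
    {l : List α} (hl : l.Pairwise (· ≤ ·)) {b : ℕ} (hb : b < l.length) :
    b + 1 ≤ l.countP (fun a => decide (a ≤ l[b])) := by
  have hprefix : ∀ a ∈ l.take (b + 1), a ≤ l[b] := by
    intro a ha
    obtain ⟨i, hi, rfl⟩ := List.mem_take_iff_getElem.1 ha
    exact hl.rel_get_of_le (a := ⟨i, by omega⟩) (b := ⟨b, hb⟩) (by simp; omega)
  calc b + 1 = (l.take (b + 1)).length := by simp; omega
    _ = (l.take (b + 1)).countP (fun a => decide (a ≤ l[b])) :=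
      (List.countP_eq_length.2 (by simpa using hprefix)).symm
    _ ≤ l.countP (fun a => decide (a ≤ l[b])) := (List.take_sublist _ _).countP_le

theorem Multiset.succ_le_countP_le_sort_getD {α : Type*} [LinearOrder α] (s : Multiset α)
    {b : ℕ} (hb : b < card s) (d : α) :
    b + 1 ≤ s.countP (· ≤ (s.sort (· ≤ ·)).getD b d) := by
  have hb' : b < (s.sort (· ≤ ·)).length := by rwa [length_sort]
  rw [List.getD_eq_getElem _ _ hb']
  calc b + 1 ≤ (s.sort (· ≤ ·)).countP (fun a => decide (a ≤ (s.sort (· ≤ ·))[b])) :=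
        List.succ_le_countP_le_getElem_of_pairwise (pairwise_sort s _) hb'
    _ = s.countP (· ≤ (s.sort (· ≤ ·))[b]) := by
      rw [← coe_countP, sort_eq]

open Classical in
theorem stmt12_general {M Y : Type*} [MetricSpace M]
    (S' : Finset (M × Y)) (xtest : M) (y : Y) (b : ℕ)
    (hcard : b + 1 ≤ (S'.filter fun p => p.2 ≠ y).card)
    (r : ℝ)
    (hr : r = (Multiset.sort
        (((S'.filter fun p => p.2 ≠ y).val).map fun p => dist xtest p.1) (· ≤ ·)).getD b 0)
    (h : M → Y) (hmist : mistakes h S' ≤ b) :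
    Metric.infDist xtest {x' | h x' ≠ y} ≤ r := by
  set T := S'.filter fun p => p.2 ≠ y
  have hnear : b < (T.filter fun p => dist xtest p.1 ≤ r).card := by
    have := Multiset.succ_le_countP_le_sort_getD (T.val.map fun p => dist xtest p.1)
      (by simpa using hcard) 0
    rwa [← hr, Multiset.countP_map] at this
  obtain ⟨p, hp, hcorrect⟩ := (Finset.card_filter_le_iff _ _ _).1 hmist _
    ((Finset.filter_subset _ _).trans (Finset.filter_subset _ _)) hnear
  rw [Finset.mem_filter, Finset.mem_filter] at hp
  obtain ⟨⟨-, hpy⟩, hpr⟩ := hp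
  have hmem : p.1 ∈ {x' | h x' ≠ y} := by simpa [not_not.1 hcorrect] using hpy
  exact (Metric.infDist_le_dist_of_mem hmem).trans hpr

open Classical in
theorem stmt12 {M Y : Type*} [MetricSpace M]
    (S' : Finset (M × Y)) (xtest : M) (y : Y) (b : ℕ)
    (hcard : b + 1 ≤ (S'.filter fun p => p.2 ≠ y).card)
    (r : ℝ)
    (hr : r = (Multiset.sort
        (((S'.filter fun p => p.2 ≠ y).val).map fun p => dist xtest p.1) (· ≤ ·)).getD b 0)
    (h : M → Y) (hxtest : h xtest = y) (hmist : mistakes h S' ≤ b) :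
    Metric.infDist xtest {x' | h x' ≠ y} ≤ r :=
  stmt12_general S' xtest y b hcard r hr h hmist
end

section
/- Let (M, d) be a metric space, Y a type, S' a finite set of labeled points in M × Y with pairwise distinct inputs, x_test ∈ M, y ∈ Y, and b ∈ ℕ. Suppose S' contains at least b+1 points with label different from y, and let r be the (b+1)-st smallest value in the multiset {d(x_test, x_i) : (x_i, y_i) ∈ S', y_i ≠ y}; assume r > 0. Then there exists a classifier h : M → Y with h(x_test) = y, making at most b mistakes on S', such that inf{d(x_test, x') : x' ∈ M, h(x') ≠ y} ≥ r. (Such an h labels the open ball of radius r around x_test as y and agrees with the labels of S' outside this ball.) -/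
theorem List.Pairwise.countP_lt_getElem_le {α : Type*} [LinearOrder α] {l : List α}
    (hl : l.Pairwise (· ≤ ·)) {i : ℕ} (hi : i < l.length) :
    l.countP (· < l[i]) ≤ i := by
  have hdrop := hl.drop (i := i)
  rw [List.drop_eq_getElem_cons hi, List.pairwise_cons] at hdrop
  have htail : (l.drop i).countP (· < l[i]) = 0 := by
    rw [List.countP_eq_zero, List.drop_eq_getElem_cons hi]
    rintro a (_ | ⟨_, ha⟩)
    · simp
    · simpa using hdrop.1 a ha
  calc l.countP (· < l[i])
      = (l.take i).countP (· < l[i]) + 0 := by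
        rw [← htail, ← List.countP_append, List.take_append_drop]
    _ ≤ i := by rw [add_zero]; exact List.countP_le_length.trans (List.length_take_le _ _)

namespace Multiset

variable {α : Type*} [LinearOrder α] {s : Multiset α} {i : ℕ}

theorem sort_getD_mem (hi : i < card s) (d : α) : (s.sort (· ≤ ·)).getD i d ∈ s := by
  rw [List.getD_eq_getElem _ _ (by rwa [length_sort]), ← mem_sort (· ≤ ·)]
  exact List.getElem_mem _

theorem countP_lt_sort_getD_le (hi : i < card s) (d : α) :
    s.countP (· < (s.sort (· ≤ ·)).getD i d) ≤ i := by
  have hi' : i < (s.sort (· ≤ ·)).length := by rwa [length_sort]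
  have := (pairwise_sort s _).countP_lt_getElem_le hi'
  rwa [← List.getD_eq_getElem _ d hi', ← coe_countP, sort_eq] at this

end Multiset

open Classical in
theorem mistakes_le_card_filter {X Y : Type*} {h : X → Y} {S : Finset (X × Y)} {P : X → Prop}
    {y : Y} (hP : ∀ x, P x → h x = y) (hS : ∀ p ∈ S, ¬ P p.1 → h p.1 = p.2) :
    mistakes h S ≤ ((S.filter fun p => p.2 ≠ y).filter fun p => P p.1).card := by
  refine Finset.card_le_card fun p hp => ?_
  simp only [Finset.mem_filter] at hp ⊢
  obtain ⟨hpS, hmiss⟩ := hp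
  by_cases hPp : P p.1
  · exact ⟨⟨hpS, fun hy => hmiss (by rw [hP _ hPp, hy])⟩, hPp⟩
  · exact absurd (hS p hpS hPp) hmiss

theorem Metric.le_infDist_of_disjoint_ball {X : Type*} [PseudoMetricSpace X] {x : X} {r : ℝ}
    {s : Set X} (hs : s.Nonempty) (hdisj : Disjoint (Metric.ball x r) s) :
    r ≤ Metric.infDist x s :=
  (Metric.le_infDist hs).2 fun _ hz => not_lt.1 fun hlt =>
    hdisj.notMem_of_mem_left (Metric.mem_ball'.2 hlt) hz

open Classical in
theorem stmt13 {M Y : Type*} [MetricSpace M]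
    (S' : Finset (M × Y)) (hinj : ∀ p ∈ S', ∀ q ∈ S', p.1 = q.1 → p = q)
    (xtest : M) (y : Y) (b : ℕ)
    (hcard : b + 1 ≤ (S'.filter fun p => p.2 ≠ y).card)
    (r : ℝ)
    (hr : r = (Multiset.sort
        (((S'.filter fun p => p.2 ≠ y).val).map fun p => dist xtest p.1) (· ≤ ·)).getD b 0)
    (hrpos : 0 < r) :
    ∃ h : M → Y, h xtest = y ∧ mistakes h S' ≤ b ∧
      r ≤ Metric.infDist xtest {x' | h x' ≠ y} := by
  have : Nonempty (M × Y) := ⟨(xtest, y)⟩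
  set label : M → Y := Prod.snd ∘ Function.invFunOn Prod.fst (S' : Set (M × Y))
  have hlabel : ∀ p ∈ S', label p.1 = p.2 := fun p hp =>
    congrArg Prod.snd (Set.InjOn.leftInvOn_invFunOn hinj hp)
  set h := (Metric.ball xtest r).piecewise (fun _ => y) label
  have hball : ∀ x ∈ Metric.ball xtest r, h x = y := fun _ hx =>
    Set.piecewise_eq_of_mem _ _ _ hx
  have houtside : ∀ p ∈ S', p.1 ∉ Metric.ball xtest r → h p.1 = p.2 := fun p hp hout =>
    (Set.piecewise_eq_of_notMem _ _ _ hout).trans (hlabel p hp)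
  set dists := ((S'.filter fun p => p.2 ≠ y).val).map fun p => dist xtest p.1
  have hb : b < Multiset.card dists := by rwa [Multiset.card_map]
  obtain ⟨p, hp, hpr⟩ := Multiset.mem_map.1 (hr ▸ Multiset.sort_getD_mem hb 0)
  obtain ⟨hpS, hpy⟩ := Finset.mem_filter.1 hp
  refine ⟨h, hball xtest (Metric.mem_ball_self hrpos), ?_, ?_⟩
  · calc mistakes h S'
        ≤ ((S'.filter fun p => p.2 ≠ y).filter fun p => p.1 ∈ Metric.ball xtest r).card :=
          mistakes_le_card_filter hball houtside
      _ = dists.countP (· < r) := by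
          simp only [dists, Multiset.countP_map, Metric.mem_ball', Finset.card_def,
            Finset.filter_val]
      _ ≤ b := hr ▸ Multiset.countP_lt_sort_getD_le hb 0
  · have hp_outside : p.1 ∉ Metric.ball xtest r := by
      rw [Metric.mem_ball, dist_comm, hpr]
      exact lt_irrefl r
    refine Metric.le_infDist_of_disjoint_ball ⟨p.1, ?_⟩
      (Set.disjoint_left.2 fun x hx hne => hne (hball x hx))
    show h p.1 ≠ y
    rwa [houtside p hpS hp_outside]
end

section
/- Let (M, d) be a metric space, Y a type, S' a finite set of labeled points in M × Y with pairwise distinct inputs, x_test ∈ M, y ∈ Y, and b ∈ ℕ. Suppose S' contains at least b+1 points with label different from y, and let r be the (b+1)-st smallest value in the multiset {d(x_test, x_i) : (x_i, y_i) ∈ S', y_i ≠ y}; assume r > 0. Then the supremum, over classifiers h : M → Y with h(x_test) = y making at most b mistakes on S', of the local margin inf{d(x_test, x') : x' ∈ M, h(x') ≠ y}, equals r, and it is attained; equivalently, the minimum local-margin complexity of such a classifier with respect to x_test equals 1/r. -/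
open scoped Finset

namespace List

variable {α : Type*} [LinearOrder α] {l : List α} {i : ℕ}

theorem Pairwise.countP_lt_getElem_le_s14 (hl : l.Pairwise (· ≤ ·)) (hi : i < l.length) :
    l.countP (· < l[i]) ≤ i := by
  set a := l[i]
  have hdrop : (l.drop i).countP (· < a) = 0 := by
    refine countP_eq_zero.mpr fun x hx => ?_
    obtain ⟨j, hj, rfl⟩ := mem_iff_getElem.mp hx
    rw [getElem_drop]
    simp only [decide_eq_true_eq, not_lt]
    exact hl.rel_get_of_le (a := ⟨i, hi⟩) (b := ⟨i + j, by simp at hj; omega⟩) (by simp)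
  calc l.countP (· < a) = (l.take i).countP (· < a) + (l.drop i).countP (· < a) := by
        rw [← countP_append, take_append_drop]
    _ ≤ i := by rw [hdrop, Nat.add_zero]; exact countP_le_length.trans (by simp)

theorem Pairwise.succ_le_countP_le_getElem (hl : l.Pairwise (· ≤ ·)) (hi : i < l.length) :
    i + 1 ≤ l.countP (· ≤ l[i]) := by
  have htake : (l.take (i + 1)).countP (· ≤ l[i]) = i + 1 := by
    rw [countP_eq_length.mpr fun x hx => ?_, length_take, Nat.min_eq_left hi]
    obtain ⟨j, hj, rfl⟩ := mem_iff_getElem.mp hx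
    rw [getElem_take]
    simp only [decide_eq_true_eq]
    exact hl.rel_get_of_le (a := ⟨j, by simp at hj; omega⟩) (b := ⟨i, hi⟩)
      (by simp at hj ⊢; omega)
  exact htake.symm.le.trans (take_sublist _ _).countP_le

end List

namespace Multiset

variable {α : Type*} [LinearOrder α] (s : Multiset α) {i : ℕ}

theorem countP_sort_eq (p : α → Prop) [DecidablePred p] :
    (s.sort (· ≤ ·)).countP p = s.countP p := by
  rw [← coe_countP, sort_eq]

theorem countP_lt_sort_getElem_le (hi : i < (s.sort (· ≤ ·)).length) :
    s.countP (· < (s.sort (· ≤ ·))[i]) ≤ i := by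
  rw [← countP_sort_eq s]
  exact (pairwise_sort s _).countP_lt_getElem_le_s14 hi

theorem succ_le_countP_le_sort_getElem (hi : i < (s.sort (· ≤ ·)).length) :
    i + 1 ≤ s.countP (· ≤ (s.sort (· ≤ ·))[i]) := by
  rw [← countP_sort_eq s]
  exact (pairwise_sort s _).succ_le_countP_le_getElem hi

end Multiset

theorem Finset.card_filter_eq_countP_map {α β : Type*} (s : Finset α) (f : α → β)
    (p : β → Prop) [DecidablePred p] : #(s.filter fun a => p (f a)) = (s.val.map f).countP p :=
  (Multiset.countP_map f s.val p).symm

theorem Metric.infDist_eq_of_mem_of_forall_le {X : Type*} [PseudoMetricSpace X] {x z : X}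
    {s : Set X} {r : ℝ} (hz : z ∈ s) (hzr : dist x z = r) (hs : ∀ w ∈ s, r ≤ dist x w) :
    Metric.infDist x s = r :=
  le_antisymm (hzr ▸ infDist_le_dist_of_mem hz) ((le_infDist ⟨z, hz⟩).mpr hs)

section Classifier

open Classical

variable {X Y : Type*} {S : Finset (X × Y)}

theorem exists_eq_const_on_and_apply_fst_eq_snd
    (hinj : ∀ p ∈ S, ∀ q ∈ S, p.1 = q.1 → p = q) (U : Set X) (y : Y) :
    ∃ h : X → Y, (∀ x ∈ U, h x = y) ∧ ∀ p ∈ S, p.1 ∉ U → h p.1 = p.2 := by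
  have hfst : Function.Injective fun p : S => p.1.1 :=
    fun p q hpq => Subtype.ext (hinj _ p.2 _ q.2 hpq)
  refine ⟨fun x => if x ∈ U then y else Function.extend (fun p : S => p.1.1) (fun p => p.1.2)
    (fun _ => y) x, fun x hx => if_pos hx, fun p hp hpU => ?_⟩
  simp only [if_neg hpU]
  exact hfst.extend_apply _ _ ⟨p, hp⟩

theorem mistakes_le_of_eq_const_on {h : X → Y} {U : Set X} {y : Y} (hU : ∀ x ∈ U, h x = y)
    (hlabels : ∀ p ∈ S, p.1 ∉ U → h p.1 = p.2) :
    mistakes h S ≤ #((S.filter fun p => p.2 ≠ y).filter fun p => p.1 ∈ U) := by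
  refine Finset.card_le_card fun p hp => ?_
  simp only [Finset.mem_filter] at hp ⊢
  by_cases hpU : p.1 ∈ U
  · exact ⟨⟨hp.1, fun hpy => hp.2 (hpy ▸ hU _ hpU)⟩, hpU⟩
  · exact absurd (hlabels p hp.1 hpU) hp.2

theorem exists_mem_apply_eq_of_mistakes_lt_card {h : X → Y} {A : Finset (X × Y)} (hA : A ⊆ S)
    (hlt : mistakes h S < #A) : ∃ p ∈ A, h p.1 = p.2 := by
  by_contra! hwrong
  exact hlt.not_ge <| Finset.card_le_card fun p hp => Finset.mem_filter.mpr ⟨hA hp, hwrong p hp⟩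

end Classifier

open Classical in
theorem stmt14 {M Y : Type*} [MetricSpace M]
    (S' : Finset (M × Y)) (hinj : ∀ p ∈ S', ∀ q ∈ S', p.1 = q.1 → p = q)
    (xtest : M) (y : Y) (b : ℕ)
    (hcard : b + 1 ≤ (S'.filter fun p => p.2 ≠ y).card)
    (r : ℝ)
    (hr : r = (Multiset.sort
        (((S'.filter fun p => p.2 ≠ y).val).map fun p => dist xtest p.1) (· ≤ ·)).getD b 0)
    (hrpos : 0 < r) :
    IsGreatest {g : ℝ | ∃ h : M → Y, h xtest = y ∧ mistakes h S' ≤ b ∧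
      g = Metric.infDist xtest {x' | h x' ≠ y}} r := by
  set T := S'.filter fun p => p.2 ≠ y
  set D := T.val.map fun p => dist xtest p.1
  have hb : b < (D.sort (· ≤ ·)).length := by
    rw [Multiset.length_sort, Multiset.card_map]; exact hcard
  have hr' : r = (D.sort (· ≤ ·))[b] := by rw [hr, List.getD_eq_getElem]
  obtain ⟨p₀, hp₀T, hp₀r⟩ : ∃ p ∈ T, dist xtest p.1 = r := by
    have hrD : r ∈ D := hr' ▸ (Multiset.mem_sort _).mp (List.getElem_mem hb)
    exact Multiset.mem_map.mp hrD
  have hfew : #(T.filter fun p => dist xtest p.1 < r) ≤ b := by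
    rw [T.card_filter_eq_countP_map (fun p => dist xtest p.1) (· < r), hr']
    exact D.countP_lt_sort_getElem_le hb
  have hmany : b + 1 ≤ #(T.filter fun p => dist xtest p.1 ≤ r) := by
    rw [T.card_filter_eq_countP_map (fun p => dist xtest p.1) (· ≤ r), hr']
    exact D.succ_le_countP_le_sort_getElem hb
  refine ⟨?_, ?_⟩
  · obtain ⟨h, hball, hlabels⟩ :=
      exists_eq_const_on_and_apply_fst_eq_snd hinj {x | dist xtest x < r} y
    have hp₀ : h p₀.1 ≠ y := by
      rw [hlabels p₀ (Finset.mem_of_mem_filter _ hp₀T) hp₀r.not_lt]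
      exact (Finset.mem_filter.mp hp₀T).2
    have hmargin : Metric.infDist xtest {x' | h x' ≠ y} = r :=
      Metric.infDist_eq_of_mem_of_forall_le hp₀ hp₀r fun w hw =>
        not_lt.mp fun hwr => hw (hball w hwr)
    exact ⟨h, hball _ (by simpa using hrpos),
      (mistakes_le_of_eq_const_on hball hlabels).trans hfew, hmargin.symm⟩
  · rintro _ ⟨h, -, hmis, rfl⟩
    obtain ⟨p, hpA, hp⟩ := exists_mem_apply_eq_of_mistakes_lt_card
      ((Finset.filter_subset _ _).trans (Finset.filter_subset _ S')) (hmis.trans_lt hmany)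
    obtain ⟨hpT, hpr⟩ := Finset.mem_filter.mp hpA
    have hpy : h p.1 ≠ y := by rw [hp]; exact (Finset.mem_filter.mp hpT).2
    exact (Metric.infDist_le_dist_of_mem hpy).trans hpr
end

section
/- Let (M, d) be a metric space, Y a type, S a finite set of labeled points in M × Y with pairwise distinct inputs, and r > 0. Let G be the graph on the elements of S with an edge between (x_i, y_i) and (x_j, y_j) iff y_i ≠ y_j and d(x_i, x_j) < 2r. If T ⊆ S is a vertex cover of G (every edge of G has at least one endpoint in T), then there exists a classifier h : M → Y with h(x) = y for every (x, y) ∈ S \ T such that for every (x_i, y_i) ∈ S \ T and every x' ∈ M with h(x') ≠ y_i, one has d(x_i, x') ≥ r; that is, S \ T is realizable with global margin at least r. -/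
open scoped Classical in
theorem stmt15 {M Y : Type*} [MetricSpace M] [Nonempty Y]
    (S : Finset (M × Y)) (hinj : ∀ p ∈ S, ∀ q ∈ S, p.1 = q.1 → p = q)
    (r : ℝ) (hrpos : 0 < r)
    (T : Finset (M × Y)) (hTS : T ⊆ S)
    (hcover : ∀ p ∈ S, ∀ q ∈ S, p.2 ≠ q.2 → dist p.1 q.1 < 2 * r → p ∈ T ∨ q ∈ T) :
    ∃ h : M → Y, (∀ p ∈ S \ T, h p.1 = p.2) ∧
      ∀ p ∈ S \ T, ∀ x' : M, h x' ≠ p.2 → r ≤ dist p.1 x' := by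
  -- key: two points of S \ T within distance < 2r have equal labels
  have key : ∀ p ∈ S \ T, ∀ q ∈ S \ T, dist p.1 q.1 < 2 * r → p.2 = q.2 := by
    intro p hp q hq hd
    by_contra hne
    rcases hcover p (Finset.mem_sdiff.mp hp).1 q (Finset.mem_sdiff.mp hq).1 hne hd with h | h
    · exact (Finset.mem_sdiff.mp hp).2 h
    · exact (Finset.mem_sdiff.mp hq).2 h
  set h : M → Y := fun x =>
    if hx : ∃ p ∈ S \ T, dist p.1 x < r then (Classical.choose hx).2
    else Classical.arbitrary Y with hdef
  refine ⟨h, ?_, ?_⟩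
  · intro p hp
    have hex : ∃ q ∈ S \ T, dist q.1 p.1 < r := ⟨p, hp, by simpa using hrpos⟩
    simp only [hdef, dif_pos hex]
    obtain ⟨hq, hqd⟩ := Classical.choose_spec hex
    refine key _ hq _ hp ?_
    calc dist (Classical.choose hex).1 p.1 < r := hqd
    _ < 2 * r := by linarith
  · intro p hp x' hne
    by_contra hlt
    push_neg at hlt
    have hex : ∃ q ∈ S \ T, dist q.1 x' < r := ⟨p, hp, hlt⟩
    have : h x' = (Classical.choose hex).2 := by simp only [hdef, dif_pos hex]
    obtain ⟨hq, hqd⟩ := Classical.choose_spec hex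
    apply hne
    rw [this]
    refine key _ hq _ hp ?_
    calc dist (Classical.choose hex).1 p.1 ≤ dist (Classical.choose hex).1 x' + dist x' p.1 :=
          dist_triangle _ _ _
    _ < r + r := by rw [dist_comm x' p.1]; exact add_lt_add_of_lt_of_le hqd hlt.le
    _ = 2 * r := by ring
end

section
/- Let Y be a type, S a finite set of labeled points in ℝ^n × Y with pairwise distinct inputs, and r > 0. Let G be the graph on the elements of S with an edge between (x_i, y_i) and (x_j, y_j) iff y_i ≠ y_j and ‖x_i − x_j‖ < 2r. If T ⊆ S is not a vertex cover of G (some edge of G has neither endpoint in T), then every classifier h : ℝ^n → Y with h(x) = y for all (x, y) ∈ S \ T satisfies: the minimum over (x_i, y_i) ∈ S \ T of inf{‖x_i − x'‖ : x' ∈ ℝ^n, h(x') ≠ y_i} is strictly less than r; that is, S \ T cannot be realized with global margin at least r. -/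
open scoped Classical in
theorem stmt16 {Y : Type*} (n : ℕ) (S : Finset (EuclideanSpace ℝ (Fin n) × Y))
    (hinj : ∀ p ∈ S, ∀ q ∈ S, p.1 = q.1 → p = q)
    (r : ℝ) (hrpos : 0 < r)
    (T : Finset (EuclideanSpace ℝ (Fin n) × Y)) (hTS : T ⊆ S)
    (hnotcover : ∃ p ∈ S, ∃ q ∈ S, p.2 ≠ q.2 ∧ dist p.1 q.1 < 2 * r ∧ p ∉ T ∧ q ∉ T)
    (h : EuclideanSpace ℝ (Fin n) → Y) (hreal : ∀ p ∈ S \ T, h p.1 = p.2) :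
    ∃ p ∈ S \ T, Metric.infDist p.1 {x' | h x' ≠ p.2} < r := by
  obtain ⟨p, hp, q, hq, hne, hd, hpT, hqT⟩ := hnotcover
  set m := midpoint ℝ p.1 q.1 with hm
  have hdp : dist p.1 m < r := by
    rw [hm, dist_left_midpoint (𝕜 := ℝ)]
    simp only [Real.norm_two]
    linarith
  have hdq : dist q.1 m < r := by
    rw [hm, dist_right_midpoint (𝕜 := ℝ)]
    simp only [Real.norm_two]
    linarith
  by_cases hc : h m = p.2
  · refine ⟨q, Finset.mem_sdiff.mpr ⟨hq, hqT⟩, ?_⟩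
    have hmem : m ∈ {x' | h x' ≠ q.2} := by simp only [Set.mem_setOf_eq, hc]; exact hne
    exact lt_of_le_of_lt (Metric.infDist_le_dist_of_mem hmem) hdq
  · refine ⟨p, Finset.mem_sdiff.mpr ⟨hp, hpT⟩, ?_⟩
    exact lt_of_le_of_lt (Metric.infDist_le_dist_of_mem hc) hdp
end
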